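/- Let ν ∈ ℝ³ with |ν| = 1 and ν_i ≠ 0 for i = 1, 2, 3, and let M be an admissible boundary matrix for A_ν. Then M₁ and M₃ are invertible, the 3×3 matrices (A'_ν)ᵀ M₁⁻¹ M₂ and A'_ν M₃⁻¹ (M₂)ᵀ are skew-symmetric, and M₃ = (A'_ν)ᵀ M₁⁻¹ A'_ν + (M₂)ᵀ M₁⁻¹ M₂ and M₁ = A'_ν M₃⁻¹ (A'_ν)ᵀ + M₂ M₃⁻¹ (M₂)ᵀ. -/

import Mathlib

open Matrix

/-- Index type for `9 = 3 + 3 + 3` block vectors/matrices. -/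
abbrev I9 := Fin 3 ⊕ (Fin 3 ⊕ Fin 3)

noncomputable def alph (lam mu : ℝ) : ℝ :=
  (2 * Real.sqrt (2 * mu) + Real.sqrt (2 * mu + 3 * lam)) / 3

noncomputable def bet (lam mu : ℝ) : ℝ :=
  (- Real.sqrt (2 * mu) + Real.sqrt (2 * mu + 3 * lam)) / 3

/-- The matrix `A'_ν`. -/
noncomputable def Ap (lam mu : ℝ) (ν : Fin 3 → ℝ) : Matrix (Fin 3) (Fin 3) ℝ :=
  - !![ν 0 * alph lam mu, ν 0 * bet lam mu, ν 0 * bet lam mu;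
       ν 1 * bet lam mu, ν 1 * alph lam mu, ν 1 * bet lam mu;
       ν 2 * bet lam mu, ν 2 * bet lam mu, ν 2 * alph lam mu]

/-- The matrix `A''_ν`. -/
noncomputable def App (mu : ℝ) (ν : Fin 3 → ℝ) : Matrix (Fin 3) (Fin 3) ℝ :=
  (- Real.sqrt mu) • !![ν 1, ν 2, 0; ν 0, 0, ν 2; 0, ν 0, ν 1]

/-- The symmetric `9 × 9` matrix `A_ν` in `3 × 3` block form. -/
noncomputable def Anu (lam mu : ℝ) (ν : Fin 3 → ℝ) : Matrix I9 I9 ℝ :=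
  Matrix.fromBlocks 0 (Matrix.fromCols (Ap lam mu ν) (App mu ν))
    (Matrix.fromRows (Ap lam mu ν)ᵀ (App mu ν)ᵀ) 0

/-- The block `M₁ = M[1..3,1..3]` of a `9 × 9` matrix. -/
def blk₁ (M : Matrix I9 I9 ℝ) : Matrix (Fin 3) (Fin 3) ℝ := M.submatrix Sum.inl Sum.inl

/-- The block `M₂ = M[1..3,4..6]`. -/
def blk₂ (M : Matrix I9 I9 ℝ) : Matrix (Fin 3) (Fin 3) ℝ :=
  M.submatrix Sum.inl (Sum.inr ∘ Sum.inl)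

/-- The block `M₂' = M[1..3,7..9]`. -/
def blk₂' (M : Matrix I9 I9 ℝ) : Matrix (Fin 3) (Fin 3) ℝ :=
  M.submatrix Sum.inl (Sum.inr ∘ Sum.inr)

/-- The block `M₃ = M[4..6,4..6]`. -/
def blk₃ (M : Matrix I9 I9 ℝ) : Matrix (Fin 3) (Fin 3) ℝ :=
  M.submatrix (Sum.inr ∘ Sum.inl) (Sum.inr ∘ Sum.inl)

/-- The block `M₃' = M[4..6,7..9]`. -/
def blk₃' (M : Matrix I9 I9 ℝ) : Matrix (Fin 3) (Fin 3) ℝ :=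
  M.submatrix (Sum.inr ∘ Sum.inl) (Sum.inr ∘ Sum.inr)

/-- The block `M₃'' = M[7..9,7..9]`. -/
def blk₃'' (M : Matrix I9 I9 ℝ) : Matrix (Fin 3) (Fin 3) ℝ :=
  M.submatrix (Sum.inr ∘ Sum.inr) (Sum.inr ∘ Sum.inr)

/-- `M` is an admissible boundary matrix for `A`: `M` is symmetric positive semidefinite,
`Ker A ⊆ Ker M`, and `Ker (A - M) + Ker (A + M) = ℝ⁹`. -/
def IsAdmissible (A M : Matrix I9 I9 ℝ) : Prop :=
  M.IsSymm ∧ M.PosSemidef ∧ (∀ x : I9 → ℝ, A.mulVec x = 0 → M.mulVec x = 0) ∧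
    LinearMap.ker (A - M).mulVecLin ⊔ LinearMap.ker (A + M).mulVecLin = ⊤

/-!
Write `A = A_ν`, `B = A'_ν` and `V± = Ker (A ∓ M)`. Positivity of `M` together with
`V₊ + V₋ = ℝ⁹` gives `Ker M = Ker A`, and this already makes `M₁`, `M₃` invertible. The quadratic
form of `A` vanishes on the six-dimensional space of vectors with zero first block, so that space
meets each `V±` only inside `Ker A`, which has dimension at most `3` because `B` is invertible.
Counting dimensions, both `V±` project onto the first block: for each `x` some `(x, w, 0)` lies in
`V±`, and the first two block rows of `A u = ± M u` then give
`M₁ = (B ∓ M₂) M₃⁻¹ (B ∓ M₂)ᵀ`, equivalently `M₃ = (B ∓ M₂)ᵀ M₁⁻¹ (B ∓ M₂)`.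
Half the sum and half the difference of the two signs are the claimed identities.
-/

lemma Matrix.PosSemidef.isSymm {n : Type*} {M : Matrix n n ℝ} (hM : M.PosSemidef) : M.IsSymm :=
  isHermitian_iff_isSymm.1 hM.isHermitian

section QuadraticForms

variable {ι : Type*} [Fintype ι] {A M : Matrix ι ι ℝ}

lemma Matrix.IsSymm.dotProduct_mulVec_comm (hA : A.IsSymm) (x y : ι → ℝ) :
    x ⬝ᵥ A *ᵥ y = A *ᵥ x ⬝ᵥ y := by
  rw [dotProduct_mulVec, ← vecMul_transpose, hA.eq]

lemma Matrix.PosSemidef.mulVec_eq_zero_of_dotProduct_mulVec_eq_zero (hM : M.PosSemidef) {u : ι → ℝ}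
    (hu : u ⬝ᵥ M *ᵥ u = 0) : M *ᵥ u = 0 :=
  (hM.dotProduct_mulVec_zero_iff u).1 (by simpa using hu)

lemma mulVec_eq_zero_of_sup_ker_eq_top (hA : A.IsSymm) (hM : M.PosSemidef)
    (hsup : LinearMap.ker (A - M).mulVecLin ⊔ LinearMap.ker (A + M).mulVecLin = ⊤)
    {u : ι → ℝ} (hu : M *ᵥ u = 0) : A *ᵥ u = 0 := by
  obtain ⟨p, hp, q, hq, rfl⟩ := Submodule.mem_sup.1 (hsup ▸ Submodule.mem_top : u ∈ _)
  simp only [LinearMap.mem_ker, mulVecLin_apply, sub_mulVec, add_mulVec, sub_eq_zero] at hp hq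
  have hq' : A *ᵥ q = -(M *ᵥ q) := eq_neg_of_add_eq_zero_left hq
  have hMs := hM.isSymm
  -- `⟨p, M q⟩ = -⟨p, A q⟩ = -⟨A p, q⟩ = -⟨M p, q⟩ = -⟨p, M q⟩`
  have hcross : p ⬝ᵥ M *ᵥ q = 0 := by
    have h := hA.dotProduct_mulVec_comm p q
    rw [hq', hp, dotProduct_neg, ← hMs.dotProduct_mulVec_comm] at h
    linarith
  have hpp : 0 ≤ p ⬝ᵥ M *ᵥ p := by simpa using hM.dotProduct_mulVec_nonneg p
  have hqq : 0 ≤ q ⬝ᵥ M *ᵥ q := by simpa using hM.dotProduct_mulVec_nonneg q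
  have h0 : (p + q) ⬝ᵥ M *ᵥ (p + q) = 0 := by rw [hu, dotProduct_zero]
  have hcross' : q ⬝ᵥ M *ᵥ p = 0 := by
    rw [hMs.dotProduct_mulVec_comm, dotProduct_comm, hcross]
  rw [mulVec_add, dotProduct_add, add_dotProduct, add_dotProduct, hcross, hcross'] at h0
  rw [mulVec_add, hp, hq', hM.mulVec_eq_zero_of_dotProduct_mulVec_eq_zero (by linarith),
    hM.mulVec_eq_zero_of_dotProduct_mulVec_eq_zero (by linarith), neg_zero, add_zero]

lemma mulVec_eq_zero_of_isotropic (hM : M.PosSemidef) {s : ℝ} (hs : s ≠ 0) {u : ι → ℝ}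
    (hu : A *ᵥ u = s • M *ᵥ u) (h0 : u ⬝ᵥ A *ᵥ u = 0) : M *ᵥ u = 0 := by
  rw [hu, dotProduct_smul, smul_eq_mul, mul_eq_zero] at h0
  exact hM.mulVec_eq_zero_of_dotProduct_mulVec_eq_zero (h0.resolve_left hs)

lemma mem_ker_sub_smul_mulVecLin {t : ℝ} {u : ι → ℝ} :
    u ∈ LinearMap.ker (A - t • M).mulVecLin ↔ A *ᵥ u = t • M *ᵥ u := by
  rw [LinearMap.mem_ker, mulVecLin_apply, sub_mulVec, smul_mulVec, sub_eq_zero]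

lemma ker_le_ker_sub_smul (hker : ∀ u, A *ᵥ u = 0 → M *ᵥ u = 0) (t : ℝ) :
    LinearMap.ker A.mulVecLin ≤ LinearMap.ker (A - t • M).mulVecLin := fun u hu => by
  replace hu : A *ᵥ u = 0 := hu
  rw [mem_ker_sub_smul_mulVecLin, hu, hker u hu, smul_zero]

end QuadraticForms

lemma Submodule.sup_eq_top_of_inf_le_of_finrank_le {K V : Type*} [DivisionRing K]
    [AddCommGroup V] [Module K V] [FiniteDimensional K V] {P Q W : Submodule K V}
    (hPQ : P ⊔ Q = ⊤) (hP : P ⊓ W ≤ Q) (hQ : Q ⊓ W ≤ P)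
    (hdim : Module.finrank K ↥(P ⊓ Q) + Module.finrank K V ≤ 2 * Module.finrank K W) :
    P ⊔ W = ⊤ := by
  apply Submodule.eq_top_of_finrank_eq
  have h₁ := Submodule.finrank_sup_add_finrank_inf_eq P Q
  have h₂ := Submodule.finrank_sup_add_finrank_inf_eq Q W
  have h₃ := Submodule.finrank_sup_add_finrank_inf_eq P W
  have h₄ := Submodule.finrank_mono (le_inf inf_le_left hP : P ⊓ W ≤ P ⊓ Q)
  have h₅ := Submodule.finrank_mono (le_inf hQ inf_le_left : Q ⊓ W ≤ P ⊓ Q)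
  have h₆ := Submodule.finrank_le (Q ⊔ W)
  have h₇ := Submodule.finrank_le (P ⊔ W)
  rw [hPQ, finrank_top] at h₁
  omega

lemma Matrix.eq_mul_inv_mul_transpose_of_forall_exists {n R : Type*} [Fintype n] [DecidableEq n]
    [CommRing R] {K N P : Matrix n n R} (hN : IsUnit N.det)
    (h : ∀ x, ∃ v, K *ᵥ x = P *ᵥ v ∧ N *ᵥ v = Pᵀ *ᵥ x) : K = P * N⁻¹ * Pᵀ := by
  refine ext_of_mulVec_single fun j => ?_
  obtain ⟨v, h₁, h₂⟩ := h (Pi.single j 1)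
  have hv : v = N⁻¹ *ᵥ (Pᵀ *ᵥ Pi.single j 1) := by
    rw [← h₂, mulVec_mulVec, nonsing_inv_mul _ hN, one_mulVec]
  rw [h₁, hv]
  simp only [mulVec_mulVec, Matrix.mul_assoc]

lemma Matrix.eq_transpose_mul_inv_mul_of_eq_mul_inv_mul_transpose {n R : Type*} [Fintype n]
    [DecidableEq n] [CommRing R] {K N P : Matrix n n R} (hK : IsUnit K.det) (hN : IsUnit N.det)
    (h : K = P * N⁻¹ * Pᵀ) : N = Pᵀ * K⁻¹ * P := by
  have hP : IsUnit P.det := by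
    rw [h, det_mul, det_mul] at hK
    exact isUnit_of_mul_isUnit_left (isUnit_of_mul_isUnit_left hK)
  have hPt : IsUnit Pᵀ.det := by rwa [det_transpose]
  rw [h, mul_inv_rev, mul_inv_rev, nonsing_inv_nonsing_inv _ hN]
  simp only [Matrix.mul_assoc, mul_nonsing_inv_cancel_left _ _ hPt, nonsing_inv_mul _ hP,
    Matrix.mul_one]

lemma Matrix.transpose_eq_neg_and_eq_add_of_eq_of_eq {n 𝕜 : Type*} [Fintype n] [Field 𝕜]
    [NeZero (2 : 𝕜)] {K N P Q : Matrix n n 𝕜} (hN : Nᵀ = N)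
    (hm : K = (P - Q) * N * (P - Q)ᵀ) (hp : K = (P + Q) * N * (P + Q)ᵀ) :
    (P * N * Qᵀ)ᵀ = -(P * N * Qᵀ) ∧ K = P * N * Pᵀ + Q * N * Qᵀ := by
  have hcross : (2 : 𝕜) • (P * N * Qᵀ + Q * N * Pᵀ) = 0 := by
    calc (2 : 𝕜) • (P * N * Qᵀ + Q * N * Pᵀ)
        = (P + Q) * N * (P + Q)ᵀ - (P - Q) * N * (P - Q)ᵀ := by
          rw [transpose_add, transpose_sub, two_smul]; noncomm_ring
      _ = 0 := by rw [← hp, ← hm, sub_self]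
  have hdiag : (2 : 𝕜) • K = (2 : 𝕜) • (P * N * Pᵀ + Q * N * Qᵀ) := by
    calc (2 : 𝕜) • K = (P + Q) * N * (P + Q)ᵀ + (P - Q) * N * (P - Q)ᵀ := by
          rw [← hp, ← hm, two_smul]
      _ = (2 : 𝕜) • (P * N * Pᵀ + Q * N * Qᵀ) := by
          rw [transpose_add, transpose_sub, two_smul]; noncomm_ring
  refine ⟨?_, smul_right_injective _ two_ne_zero hdiag⟩
  rw [smul_eq_zero, or_iff_right two_ne_zero, add_eq_zero_iff_eq_neg'] at hcross
  rw [transpose_mul, transpose_mul, transpose_transpose, hN, ← Matrix.mul_assoc, hcross]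

def firstBlockNull : Submodule ℝ (I9 → ℝ) :=
  LinearMap.ker (LinearMap.funLeft ℝ ℝ (Sum.inl : Fin 3 → I9))

lemma mem_firstBlockNull {u : I9 → ℝ} : u ∈ firstBlockNull ↔ u ∘ Sum.inl = 0 := Iff.rfl

lemma finrank_firstBlockNull : Module.finrank ℝ firstBlockNull = 6 := by
  unfold firstBlockNull
  have h := LinearMap.finrank_range_add_finrank_ker (LinearMap.funLeft ℝ ℝ (Sum.inl : Fin 3 → I9))
  rw [LinearMap.range_eq_top.2 (LinearMap.funLeft_surjective_of_injective _ _ _ Sum.inl_injective),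
    finrank_top] at h
  simp only [Module.finrank_fintype_fun_eq_card, Fintype.card_sum, Fintype.card_fin] at h
  exact Nat.add_left_cancel h

lemma sum_elim_dotProduct (x w : Fin 3 → ℝ) (v : I9 → ℝ) :
    Sum.elim x (Sum.elim w 0) ⬝ᵥ v = x ⬝ᵥ v ∘ Sum.inl + w ⬝ᵥ v ∘ Sum.inr ∘ Sum.inl := by
  simp [dotProduct, Fintype.sum_sum_type]

lemma mulVec_sum_elim_comp_inl (M : Matrix I9 I9 ℝ) (x w : Fin 3 → ℝ) :
    (M *ᵥ Sum.elim x (Sum.elim w 0)) ∘ Sum.inl = blk₁ M *ᵥ x + blk₂ M *ᵥ w := by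
  ext i
  simp [mulVec, dotProduct, Fintype.sum_sum_type, blk₁, blk₂]

lemma mulVec_sum_elim_comp_inr_inl {M : Matrix I9 I9 ℝ} (hM : M.IsSymm) (x w : Fin 3 → ℝ) :
    (M *ᵥ Sum.elim x (Sum.elim w 0)) ∘ Sum.inr ∘ Sum.inl = (blk₂ M)ᵀ *ᵥ x + blk₃ M *ᵥ w := by
  ext i
  simp [mulVec, dotProduct, Fintype.sum_sum_type, blk₂, blk₃, hM.apply]

def blockAnu (B C : Matrix (Fin 3) (Fin 3) ℝ) : Matrix I9 I9 ℝ :=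
  fromBlocks 0 (fromCols B C) (fromRows Bᵀ Cᵀ) 0

section BlockAnu

variable {B C : Matrix (Fin 3) (Fin 3) ℝ} {M : Matrix I9 I9 ℝ}

lemma blockAnu_mulVec (u : I9 → ℝ) :
    blockAnu B C *ᵥ u = Sum.elim (B *ᵥ (u ∘ Sum.inr ∘ Sum.inl) + C *ᵥ (u ∘ Sum.inr ∘ Sum.inr))
      (Sum.elim (Bᵀ *ᵥ (u ∘ Sum.inl)) (Cᵀ *ᵥ (u ∘ Sum.inl))) := by
  simp [blockAnu, fromBlocks_mulVec, fromCols_mulVec, fromRows_mulVec, Function.comp_assoc]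

lemma blockAnu_mulVec_sum_elim (x y z : Fin 3 → ℝ) :
    blockAnu B C *ᵥ Sum.elim x (Sum.elim y z) =
      Sum.elim (B *ᵥ y + C *ᵥ z) (Sum.elim (Bᵀ *ᵥ x) (Cᵀ *ᵥ x)) := by
  simp [blockAnu_mulVec, ← Function.comp_assoc]

lemma blockAnu_isSymm : (blockAnu B C).IsSymm := by
  simp [blockAnu, IsSymm, fromBlocks_transpose, transpose_fromCols, transpose_fromRows]

lemma dotProduct_blockAnu_mulVec_eq_zero {u : I9 → ℝ} (hu : u ∘ Sum.inl = 0) :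
    u ⬝ᵥ blockAnu B C *ᵥ u = 0 := by
  have hu' : ∀ i, u (Sum.inl i) = 0 := fun i => congrFun hu i
  rw [blockAnu_mulVec, hu]
  simp [dotProduct, Fintype.sum_sum_type, hu']

lemma comp_inl_eq_zero_of_blockAnu_mulVec_eq_zero (hB : IsUnit B.det) {u : I9 → ℝ}
    (hu : blockAnu B C *ᵥ u = 0) : u ∘ Sum.inl = 0 := by
  have h := congrArg (· ∘ Sum.inr ∘ Sum.inl) hu
  simp only [blockAnu_mulVec] at h
  exact eq_zero_of_mulVec_eq_zero (by rw [det_transpose]; exact hB.ne_zero) h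

lemma blockAnu_mulVec_kernel (hB : IsUnit B.det) (z : Fin 3 → ℝ) :
    blockAnu B C *ᵥ Sum.elim 0 (Sum.elim (-((B⁻¹ * C) *ᵥ z)) z) = 0 := by
  rw [blockAnu_mulVec]
  simp [← Function.comp_assoc, mulVec_neg, mulVec_mulVec, mul_nonsing_inv_cancel_left _ _ hB]

lemma finrank_ker_blockAnu_le (hB : IsUnit B.det) :
    Module.finrank ℝ (LinearMap.ker (blockAnu B C).mulVecLin) ≤ 3 := by
  set K := LinearMap.ker (blockAnu B C).mulVecLin
  have hinj : Function.Injective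
      ((LinearMap.funLeft ℝ ℝ (Sum.inr ∘ Sum.inr : Fin 3 → I9)).comp K.subtype) := by
    rw [← LinearMap.ker_eq_bot, LinearMap.ker_eq_bot']
    rintro ⟨u, hu⟩ hz
    replace hz : u ∘ Sum.inr ∘ Sum.inr = 0 := hz
    replace hu : blockAnu B C *ᵥ u = 0 := hu
    have hx := comp_inl_eq_zero_of_blockAnu_mulVec_eq_zero hB hu
    have hy : u ∘ Sum.inr ∘ Sum.inl = 0 := by
      have h := congrArg (· ∘ Sum.inl) hu
      simp only [blockAnu_mulVec, hz, mulVec_zero, add_zero] at h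
      exact eq_zero_of_mulVec_eq_zero hB.ne_zero h
    ext (i | i | i)
    exacts [congrFun hx i, congrFun hy i, congrFun hz i]
  simpa using LinearMap.finrank_le_finrank_of_injective hinj

lemma isUnit_det_blk₁ (hB : IsUnit B.det) (hM : M.PosSemidef)
    (hMA : ∀ u, M *ᵥ u = 0 → blockAnu B C *ᵥ u = 0) : IsUnit (blk₁ M).det := by
  rw [isUnit_iff_ne_zero]
  intro h
  obtain ⟨x, hx0, hx⟩ := exists_mulVec_eq_zero_iff.2 h
  have hq : Sum.elim x (Sum.elim 0 0) ⬝ᵥ M *ᵥ Sum.elim x (Sum.elim 0 0) = 0 := by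
    rw [sum_elim_dotProduct, mulVec_sum_elim_comp_inl, hx]
    simp
  exact hx0 (comp_inl_eq_zero_of_blockAnu_mulVec_eq_zero hB
    (hMA _ (hM.mulVec_eq_zero_of_dotProduct_mulVec_eq_zero hq)))

lemma isUnit_det_blk₃ (hB : IsUnit B.det) (hM : M.PosSemidef)
    (hMA : ∀ u, M *ᵥ u = 0 → blockAnu B C *ᵥ u = 0) : IsUnit (blk₃ M).det := by
  rw [isUnit_iff_ne_zero]
  intro h
  obtain ⟨y, hy0, hy⟩ := exists_mulVec_eq_zero_iff.2 h
  have hq : Sum.elim 0 (Sum.elim y 0) ⬝ᵥ M *ᵥ Sum.elim 0 (Sum.elim y 0) = 0 := by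
    rw [sum_elim_dotProduct, mulVec_sum_elim_comp_inr_inl hM.isSymm, hy]
    simp
  have hA := congrArg (· ∘ Sum.inl) (hMA _ (hM.mulVec_eq_zero_of_dotProduct_mulVec_eq_zero hq))
  simp only [blockAnu_mulVec_sum_elim, mulVec_zero, add_zero, Sum.elim_comp_inl] at hA
  exact hy0 (eq_zero_of_mulVec_eq_zero hB.ne_zero hA)

lemma ker_sub_smul_inf_firstBlockNull_le (hM : M.PosSemidef)
    (hMA : ∀ u, M *ᵥ u = 0 → blockAnu B C *ᵥ u = 0) {t : ℝ} (ht : t ≠ 0) :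
    LinearMap.ker (blockAnu B C - t • M).mulVecLin ⊓ firstBlockNull ≤
      LinearMap.ker (blockAnu B C).mulVecLin := fun u ⟨hu, hu'⟩ =>
  hMA u (mulVec_eq_zero_of_isotropic hM ht (mem_ker_sub_smul_mulVecLin.1 hu)
    (dotProduct_blockAnu_mulVec_eq_zero hu'))

lemma ker_sub_smul_sup_firstBlockNull (hB : IsUnit B.det)
    (hM : IsAdmissible (blockAnu B C) M) {s : ℝ} (hs : s = 1 ∨ s = -1) :
    LinearMap.ker (blockAnu B C - s • M).mulVecLin ⊔ firstBlockNull = ⊤ := by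
  obtain ⟨-, hpsd, hker, hsup⟩ := hM
  set V : ℝ → Submodule ℝ (I9 → ℝ) := fun t => LinearMap.ker (blockAnu B C - t • M).mulVecLin
  have hMA : ∀ u, M *ᵥ u = 0 → blockAnu B C *ᵥ u = 0 := fun u =>
    mulVec_eq_zero_of_sup_ker_eq_top blockAnu_isSymm hpsd hsup
  have hVW : ∀ t : ℝ, t ≠ 0 → ∀ t', V t ⊓ firstBlockNull ≤ V t' := fun t ht t' =>
    (ker_sub_smul_inf_firstBlockNull_le hpsd hMA ht).trans (ker_le_ker_sub_smul hker t')
  have hinf : V 1 ⊓ V (-1) ≤ LinearMap.ker (blockAnu B C).mulVecLin := fun u hu => by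
    have h₁ := mem_ker_sub_smul_mulVecLin.1 (Submodule.mem_inf.1 hu).1
    have h₂ := mem_ker_sub_smul_mulVecLin.1 (Submodule.mem_inf.1 hu).2
    have hMu : M *ᵥ u = 0 := by
      linear_combination (norm := module) (-2⁻¹ : ℝ) • (h₂.symm.trans h₁)
    show blockAnu B C *ᵥ u = 0
    rw [h₁, hMu, smul_zero]
  have hsup' : V 1 ⊔ V (-1) = ⊤ := by
    simp only [V, one_smul, neg_smul, sub_neg_eq_add]
    exact hsup
  have hdim : Module.finrank ℝ ↥(V 1 ⊓ V (-1)) + Module.finrank ℝ (I9 → ℝ) ≤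
      2 * Module.finrank ℝ firstBlockNull := by
    have := (Submodule.finrank_mono hinf).trans (finrank_ker_blockAnu_le hB)
    simp only [finrank_firstBlockNull, Module.finrank_fintype_fun_eq_card, Fintype.card_sum,
      Fintype.card_fin]
    omega
  rcases hs with rfl | rfl
  · exact Submodule.sup_eq_top_of_inf_le_of_finrank_le hsup' (hVW 1 one_ne_zero _)
      (hVW (-1) (by norm_num) _) hdim
  · exact Submodule.sup_eq_top_of_inf_le_of_finrank_le (sup_comm (V 1) _ ▸ hsup')
      (hVW (-1) (by norm_num) _) (hVW 1 one_ne_zero _) (inf_comm (V 1) _ ▸ hdim)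

lemma exists_sum_elim_mem (hB : IsUnit B.det) {V : Submodule ℝ (I9 → ℝ)}
    (hKV : LinearMap.ker (blockAnu B C).mulVecLin ≤ V) (hV : V ⊔ firstBlockNull = ⊤)
    (x : Fin 3 → ℝ) : ∃ w, Sum.elim x (Sum.elim w 0) ∈ V := by
  obtain ⟨v, hv, k, hk, hvk⟩ :=
    Submodule.mem_sup.1 (hV ▸ Submodule.mem_top : Sum.elim x 0 ∈ V ⊔ firstBlockNull)
  set z := v ∘ Sum.inr ∘ Sum.inr
  -- subtracting a kernel vector of `A` clears the third block
  have hker : Sum.elim (0 : Fin 3 → ℝ) (Sum.elim (-((B⁻¹ * C) *ᵥ z)) z) ∈ V :=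
    hKV (blockAnu_mulVec_kernel hB z)
  refine ⟨v ∘ Sum.inr ∘ Sum.inl + (B⁻¹ * C) *ᵥ z, ?_⟩
  convert V.sub_mem hv hker using 1
  ext (i | i | i)
  · have hki : k (Sum.inl i) = 0 := congrFun (mem_firstBlockNull.1 hk) i
    have := congrFun hvk (Sum.inl i)
    simp only [Pi.add_apply, Sum.elim_inl, hki, add_zero] at this
    simp [this]
  · simp
  · simp [z]

lemma exists_blockAnu_mulVec_eq_smul (hB : IsUnit B.det) (hM : IsAdmissible (blockAnu B C) M)
    {s : ℝ} (hs : s = 1 ∨ s = -1) (x : Fin 3 → ℝ) :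
    ∃ w, blockAnu B C *ᵥ Sum.elim x (Sum.elim w 0) = s • M *ᵥ Sum.elim x (Sum.elim w 0) := by
  obtain ⟨w, hw⟩ := exists_sum_elim_mem hB (ker_le_ker_sub_smul hM.2.2.1 s)
    (ker_sub_smul_sup_firstBlockNull hB hM hs) x
  exact ⟨w, mem_ker_sub_smul_mulVecLin.1 hw⟩

lemma blk_mulVec_eq_of_blockAnu_mulVec_eq_smul (hMs : M.IsSymm) {s : ℝ} (hs : s * s = 1)
    {x w : Fin 3 → ℝ}
    (h : blockAnu B C *ᵥ Sum.elim x (Sum.elim w 0) = s • M *ᵥ Sum.elim x (Sum.elim w 0)) :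
    blk₁ M *ᵥ x = (B - s • blk₂ M) *ᵥ (s • w) ∧
      blk₃ M *ᵥ (s • w) = (B - s • blk₂ M)ᵀ *ᵥ x := by
  rw [blockAnu_mulVec_sum_elim, mulVec_zero, add_zero] at h
  have h₁ := congrArg (· ∘ Sum.inl) h
  have h₂ := congrArg (· ∘ Sum.inr ∘ Sum.inl) h
  rw [Sum.elim_comp_inl, Pi.smul_comp, mulVec_sum_elim_comp_inl] at h₁
  rw [← Function.comp_assoc, Sum.elim_comp_inr, Sum.elim_comp_inl, Pi.smul_comp,
    mulVec_sum_elim_comp_inr_inl hMs] at h₂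
  simp only [transpose_sub, transpose_smul, sub_mulVec, smul_mulVec, mulVec_smul]
  constructor
  · linear_combination (norm := module) (-s) • h₁ - hs • (blk₁ M *ᵥ x)
  · linear_combination (norm := module) -h₂

lemma blk₁_eq_of_forall_exists_blockAnu_mulVec_eq_smul (hMs : M.IsSymm)
    (h₃ : IsUnit (blk₃ M).det) {s : ℝ} (hs : s * s = 1)
    (h : ∀ x, ∃ w, blockAnu B C *ᵥ Sum.elim x (Sum.elim w 0) =
      s • M *ᵥ Sum.elim x (Sum.elim w 0)) :
    blk₁ M = (B - s • blk₂ M) * (blk₃ M)⁻¹ * (B - s • blk₂ M)ᵀ :=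
  eq_mul_inv_mul_transpose_of_forall_exists h₃ fun x =>
    let ⟨w, hw⟩ := h x
    ⟨s • w, blk_mulVec_eq_of_blockAnu_mulVec_eq_smul hMs hs hw⟩

theorem blocks_of_isAdmissible_blockAnu (hB : IsUnit B.det)
    (hM : IsAdmissible (blockAnu B C) M) :
    IsUnit (blk₁ M).det ∧ IsUnit (blk₃ M).det ∧
      (Bᵀ * (blk₁ M)⁻¹ * blk₂ M)ᵀ = -(Bᵀ * (blk₁ M)⁻¹ * blk₂ M) ∧
      (B * (blk₃ M)⁻¹ * (blk₂ M)ᵀ)ᵀ = -(B * (blk₃ M)⁻¹ * (blk₂ M)ᵀ) ∧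
      blk₃ M = Bᵀ * (blk₁ M)⁻¹ * B + (blk₂ M)ᵀ * (blk₁ M)⁻¹ * blk₂ M ∧
      blk₁ M = B * (blk₃ M)⁻¹ * Bᵀ + blk₂ M * (blk₃ M)⁻¹ * (blk₂ M)ᵀ := by
  obtain ⟨hMs, hpsd, -, hsup⟩ := id hM
  have hMA : ∀ u, M *ᵥ u = 0 → blockAnu B C *ᵥ u = 0 := fun u =>
    mulVec_eq_zero_of_sup_ker_eq_top blockAnu_isSymm hpsd hsup
  have h₁ := isUnit_det_blk₁ hB hpsd hMA
  have h₃ := isUnit_det_blk₃ hB hpsd hMA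
  have hF : ∀ s : ℝ, (s = 1 ∨ s = -1) →
      blk₁ M = (B - s • blk₂ M) * (blk₃ M)⁻¹ * (B - s • blk₂ M)ᵀ := fun s hs =>
    blk₁_eq_of_forall_exists_blockAnu_mulVec_eq_smul hMs h₃
      (by rcases hs with rfl | rfl <;> norm_num) (exists_blockAnu_mulVec_eq_smul hB hM hs)
  have hFm := hF 1 (.inl rfl)
  have hFp := hF (-1) (.inr rfl)
  simp only [one_smul, neg_smul, sub_neg_eq_add] at hFm hFp
  have hGm := eq_transpose_mul_inv_mul_of_eq_mul_inv_mul_transpose h₁ h₃ hFm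
  have hGp := eq_transpose_mul_inv_mul_of_eq_mul_inv_mul_transpose h₁ h₃ hFp
  have hS₁ : (blk₁ M)ᵀ = blk₁ M := hMs.submatrix Sum.inl
  have hS₃ : (blk₃ M)ᵀ = blk₃ M := hMs.submatrix (Sum.inr ∘ Sum.inl)
  have hN₁ : (blk₁ M)⁻¹ᵀ = (blk₁ M)⁻¹ := by rw [transpose_nonsing_inv, hS₁]
  have hN₃ : (blk₃ M)⁻¹ᵀ = (blk₃ M)⁻¹ := by rw [transpose_nonsing_inv, hS₃]
  obtain ⟨hskew₁, hM₃⟩ := transpose_eq_neg_and_eq_add_of_eq_of_eq (K := blk₃ M)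
    (P := Bᵀ) (Q := (blk₂ M)ᵀ) hN₁
    (by rwa [← transpose_sub, transpose_transpose]) (by rwa [← transpose_add, transpose_transpose])
  obtain ⟨hskew₃, hM₁⟩ := transpose_eq_neg_and_eq_add_of_eq_of_eq hN₃ hFm hFp
  rw [transpose_transpose] at hskew₁ hM₃
  exact ⟨h₁, h₃, hskew₁, hskew₃, hM₃, hM₁⟩

end BlockAnu

lemma det_Ap (lam mu : ℝ) (ν : Fin 3 → ℝ) :
    (Ap lam mu ν).det = -(ν 0 * ν 1 * ν 2 *
      ((alph lam mu - bet lam mu) ^ 2 * (alph lam mu + 2 * bet lam mu))) := by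
  simp only [Ap, neg_of, neg_cons, neg_empty, det_fin_three, of_apply, cons_val', cons_val_zero,
    cons_val_fin_one, cons_val_one, mul_neg, neg_mul, neg_neg, cons_val, sub_neg_eq_add]
  ring

lemma isUnit_det_Ap (lam mu : ℝ) (hmu : 0 < mu) (hlm : 0 < 2 * mu + 3 * lam)
    (ν : Fin 3 → ℝ) (hν0 : ∀ i : Fin 3, ν i ≠ 0) : IsUnit (Ap lam mu ν).det := by
  have hα : alph lam mu - bet lam mu = Real.sqrt (2 * mu) := by unfold alph bet; ring
  have hβ : alph lam mu + 2 * bet lam mu = Real.sqrt (2 * mu + 3 * lam) := by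
    unfold alph bet; ring
  rw [isUnit_iff_ne_zero, det_Ap, hα, hβ, Real.sq_sqrt (by positivity)]
  have := hν0 0; have := hν0 1; have := hν0 2
  have := Real.sqrt_pos.2 hlm
  simp only [neg_ne_zero]
  positivity

theorem stmt8_general (lam mu : ℝ) (hmu : 0 < mu) (hlm : 0 < 2 * mu + 3 * lam) (ν : Fin 3 → ℝ)
    (hν0 : ∀ i : Fin 3, ν i ≠ 0)
    (M : Matrix I9 I9 ℝ) (hM : IsAdmissible (Anu lam mu ν) M) :
    IsUnit (blk₁ M).det ∧ IsUnit (blk₃ M).det ∧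
      ((Ap lam mu ν)ᵀ * (blk₁ M)⁻¹ * blk₂ M)ᵀ = -((Ap lam mu ν)ᵀ * (blk₁ M)⁻¹ * blk₂ M) ∧
      (Ap lam mu ν * (blk₃ M)⁻¹ * (blk₂ M)ᵀ)ᵀ = -(Ap lam mu ν * (blk₃ M)⁻¹ * (blk₂ M)ᵀ) ∧
      blk₃ M = (Ap lam mu ν)ᵀ * (blk₁ M)⁻¹ * Ap lam mu ν + (blk₂ M)ᵀ * (blk₁ M)⁻¹ * blk₂ M ∧
      blk₁ M = Ap lam mu ν * (blk₃ M)⁻¹ * (Ap lam mu ν)ᵀ + blk₂ M * (blk₃ M)⁻¹ * (blk₂ M)ᵀ :=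
  blocks_of_isAdmissible_blockAnu (isUnit_det_Ap lam mu hmu hlm ν hν0) hM

theorem stmt8 (lam mu : ℝ) (hmu : 0 < mu) (hlm : 0 < 2 * mu + 3 * lam) (ν : Fin 3 → ℝ)
    (hν : ν 0 ^ 2 + ν 1 ^ 2 + ν 2 ^ 2 = 1)
    (hν0 : ∀ i : Fin 3, ν i ≠ 0)
    (M : Matrix I9 I9 ℝ) (hM : IsAdmissible (Anu lam mu ν) M) :
    IsUnit (blk₁ M).det ∧ IsUnit (blk₃ M).det ∧
      ((Ap lam mu ν)ᵀ * (blk₁ M)⁻¹ * blk₂ M)ᵀ = -((Ap lam mu ν)ᵀ * (blk₁ M)⁻¹ * blk₂ M) ∧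
      (Ap lam mu ν * (blk₃ M)⁻¹ * (blk₂ M)ᵀ)ᵀ = -(Ap lam mu ν * (blk₃ M)⁻¹ * (blk₂ M)ᵀ) ∧
      blk₃ M = (Ap lam mu ν)ᵀ * (blk₁ M)⁻¹ * Ap lam mu ν + (blk₂ M)ᵀ * (blk₁ M)⁻¹ * blk₂ M ∧
      blk₁ M = Ap lam mu ν * (blk₃ M)⁻¹ * (Ap lam mu ν)ᵀ + blk₂ M * (blk₃ M)⁻¹ * (blk₂ M)ᵀ :=
  stmt8_general lam mu hmu hlm ν hν0 M hM
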